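/- arXiv:2006.10501 — 2 statements merged into one kernel-verified Lean document; each statement's English description precedes it below -/
import Mathlib

section
/- Let R ≅ R₁ × ... × Rₙ (n ≥ 2) be a finite commutative ring with each Rᵢ local with Jacobson radical Jᵢ of nilpotency order nᵢ. If M, N are distinct vertices of AG(R) and there exists s with πₛ(M) ≠ Rₛ and πₛ(N) ≠ Rₛ, then d(M,N) ≤ 2 in AG(R): both M and N are adjacent to (or equal to) the ideal I_{s,nₛ-1} which is Jₛ^{nₛ-1} in the s-th component and 0 elsewhere. -/
open Ideal IsLocalRing

/-- A nonzero ideal with nonzero annihilator: a vertex of the annihilating-ideal graph. -/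
def AGIsVertex {R : Type*} [CommRing R] (I : Ideal R) : Prop :=
  I ≠ ⊥ ∧ ∃ K : Ideal R, K ≠ ⊥ ∧ I * K = ⊥

/-- The vertex set of the annihilating-ideal graph. -/
def AGVertex (R : Type*) [CommRing R] : Type _ := {I : Ideal R // AGIsVertex I}

/-- The annihilating-ideal graph of a commutative ring. -/
def AG (R : Type*) [CommRing R] : SimpleGraph (AGVertex R) where
  Adj I J := I ≠ J ∧ I.1 * J.1 = ⊥
  symm := ⟨by
    rintro a b ⟨h1, h2⟩
    exact ⟨h1.symm, by rwa [mul_comm] at h2⟩⟩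
  loopless := ⟨by rintro a ⟨h, -⟩; exact h rfl⟩

/-- A resolving set for a graph. -/
def IsResolving {V : Type*} (G : SimpleGraph V) (W : Set V) : Prop :=
  ∀ u v : V, (∀ w ∈ W, G.dist u w = G.dist v w) → u = v

/-- The metric dimension of a graph. -/
noncomputable def metricDim {V : Type*} (G : SimpleGraph V) : ℕ :=
  sInf {n | ∃ W : Set V, IsResolving G W ∧ W.Finite ∧ W.ncard = n}

/-- The ideal of a product ring given by a family of ideals of the factors. -/
def piIdeal {ι : Type*} {R : ι → Type*} [∀ i, CommRing (R i)]
    (I : ∀ i, Ideal (R i)) : Ideal (∀ i, R i) where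
  carrier := {x | ∀ i, x i ∈ I i}
  add_mem' h1 h2 i := (I _).add_mem (h1 i) (h2 i)
  zero_mem' i := (I i).zero_mem
  smul_mem' c x hx := by
    intro i
    simpa using (I i).mul_mem_left (c i) (hx i)

/-- The family of ideals with the ideal `I` at index `s` and zero elsewhere. -/
def singleIdeal {ι : Type*} [DecidableEq ι] {R : ι → Type*} [∀ i, CommRing (R i)]
    (s : ι) (I : Ideal (R s)) : ∀ i, Ideal (R i) :=
  fun i => if h : i = s then cast (by rw [h]) I else ⊥

/-- The family of ideals with the ideal `I` at index `s` and everything elsewhere. -/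
def coSingleIdeal {ι : Type*} [DecidableEq ι] {R : ι → Type*} [∀ i, CommRing (R i)]
    (s : ι) (I : Ideal (R s)) : ∀ i, Ideal (R i) :=
  fun i => if h : i = s then cast (by rw [h]) I else ⊤

lemma mem_piIdeal {ι : Type*} {R : ι → Type*} [∀ i, CommRing (R i)]
    {I : ∀ i, Ideal (R i)} {x : ∀ i, R i} : x ∈ piIdeal I ↔ ∀ i, x i ∈ I i := Iff.rfl

lemma singleIdeal_self {ι : Type*} [DecidableEq ι] {R : ι → Type*} [∀ i, CommRing (R i)]
    (s : ι) (I : Ideal (R s)) : singleIdeal s I s = I := by simp [singleIdeal]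

lemma singleIdeal_ne {ι : Type*} [DecidableEq ι] {R : ι → Type*} [∀ i, CommRing (R i)]
    {s i : ι} (h : i ≠ s) (I : Ideal (R s)) : singleIdeal s I i = ⊥ := dif_neg h

theorem stmt5 (ι : Type*) [Fintype ι] [DecidableEq ι] (R : ι → Type*)
    [∀ i, CommRing (R i)] [∀ i, Finite (R i)] [∀ i, IsLocalRing (R i)]
    (ν : ι → ℕ) (h1 : ∀ i, (maximalIdeal (R i)) ^ (ν i) = ⊥)
    (h2 : ∀ i, (maximalIdeal (R i)) ^ (ν i - 1) ≠ ⊥) (hn : 2 ≤ Fintype.card ι)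
    (M N : AGVertex (∀ i, R i)) (hMN : M ≠ N)
    (s : ι) (hM : Ideal.map (Pi.evalRingHom R s) M.1 ≠ ⊤) (hN : Ideal.map (Pi.evalRingHom R s) N.1 ≠ ⊤) :
    ∃ v : AGVertex (∀ i, R i),
      v.1 = piIdeal (singleIdeal s ((maximalIdeal (R s)) ^ (ν s - 1))) ∧
      ((AG (∀ i, R i)).Adj M v ∨ M = v) ∧ ((AG (∀ i, R i)).Adj N v ∨ N = v) ∧
      (AG (∀ i, R i)).dist M N ≤ 2 := by
  classical
  set m := maximalIdeal (R s) with hm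
  set Vid := piIdeal (singleIdeal s (m ^ (ν s - 1))) with hVid
  have hν : ν s ≠ 0 := by
    intro h
    exact h2 s (by simpa [h] using h1 s)
  -- key annihilation lemma
  have key : ∀ P : Ideal (∀ i, R i), Ideal.map (Pi.evalRingHom R s) P ≠ ⊤ → P * Vid = ⊥ := by
    intro P hP
    rw [eq_bot_iff, Ideal.mul_le]
    intro x hx y hy
    rw [Ideal.mem_bot]
    funext i
    by_cases hi : i = s
    · subst hi
      have hys : y i ∈ m ^ (ν i - 1) := by
        have := hy i
        rwa [singleIdeal_self] at this
      have hxs : x i ∈ m := by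
        have hmem : (Pi.evalRingHom R i) x ∈ Ideal.map (Pi.evalRingHom R i) P :=
          Ideal.mem_map_of_mem _ hx
        exact IsLocalRing.le_maximalIdeal hP hmem
      have : x i * y i ∈ m * m ^ (ν i - 1) := Ideal.mul_mem_mul hxs hys
      rw [← pow_succ', Nat.sub_add_cancel (Nat.one_le_iff_ne_zero.mpr hν), h1 i,
        Ideal.mem_bot] at this
      simpa using this
    · have : y i ∈ (⊥ : Ideal (R i)) := by
        have := hy i
        rwa [singleIdeal_ne hi] at this
      rw [Ideal.mem_bot] at this
      simp [this]
  -- Vid is a vertex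
  obtain ⟨t, ht⟩ := Fintype.exists_ne_of_one_lt_card (by omega) s
  have hVne : Vid ≠ ⊥ := by
    obtain ⟨a, ha, ha0⟩ := Submodule.exists_mem_ne_zero_of_ne_bot (h2 s)
    intro hbot
    have hmem : Pi.single s a ∈ Vid := by
      intro i
      by_cases hi : i = s
      · subst hi
        rw [singleIdeal_self, Pi.single_eq_same]
        exact ha
      · rw [singleIdeal_ne hi, Ideal.mem_bot, Pi.single_eq_of_ne hi]
    rw [hbot, Ideal.mem_bot] at hmem
    exact ha0 (by simpa using congrFun hmem s)
  have hKne : piIdeal (singleIdeal t (⊤ : Ideal (R t))) ≠ ⊥ := by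
    intro hbot
    have hmem : Pi.single t (1 : R t) ∈ piIdeal (singleIdeal t (⊤ : Ideal (R t))) := by
      intro i
      by_cases hi : i = t
      · subst hi; rw [singleIdeal_self]; trivial
      · rw [singleIdeal_ne hi, Ideal.mem_bot, Pi.single_eq_of_ne hi]
    rw [hbot, Ideal.mem_bot] at hmem
    have := congrFun hmem t
    simp at this
  have hVK : Vid * piIdeal (singleIdeal t (⊤ : Ideal (R t))) = ⊥ := by
    rw [eq_bot_iff, Ideal.mul_le]
    intro x hx y hy
    rw [Ideal.mem_bot]
    funext i
    by_cases hi : i = s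
    · have hyt : y i ∈ (⊥ : Ideal (R i)) := by
        have := hy i
        rwa [singleIdeal_ne (hi ▸ ht.symm : i ≠ t)] at this
      rw [Ideal.mem_bot] at hyt
      simp [hyt]
    · have hxi : x i ∈ (⊥ : Ideal (R i)) := by
        have := hx i
        rwa [singleIdeal_ne hi] at this
      rw [Ideal.mem_bot] at hxi
      simp [hxi]
  refine ⟨⟨Vid, hVne, _, hKne, hVK⟩, rfl, ?_, ?_, ?_⟩
  all_goals
    set v : AGVertex (∀ i, R i) := ⟨Vid, hVne, _, hKne, hVK⟩ with hv
  · by_cases h : M = v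
    · exact Or.inr h
    · exact Or.inl ⟨h, key M.1 hM⟩
  · by_cases h : N = v
    · exact Or.inr h
    · exact Or.inl ⟨h, key N.1 hN⟩
  · by_cases hMv : M = v
    · by_cases hNv : N = v
      · exact absurd (hMv.trans hNv.symm) hMN
      · have hadj : (AG (∀ i, R i)).Adj M N := by
          rw [hMv]
          exact ((AG (∀ i, R i)).adj_symm ⟨hNv, key N.1 hN⟩)
        calc (AG (∀ i, R i)).dist M N ≤ (SimpleGraph.Walk.cons hadj .nil).length :=
              SimpleGraph.dist_le _
          _ ≤ 2 := by simp
    · by_cases hNv : N = v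
      · have hadj : (AG (∀ i, R i)).Adj M N := by
          rw [hNv]
          exact ⟨hMv, key M.1 hM⟩
        calc (AG (∀ i, R i)).dist M N ≤ (SimpleGraph.Walk.cons hadj .nil).length :=
              SimpleGraph.dist_le _
          _ ≤ 2 := by simp
      · have hMadj : (AG (∀ i, R i)).Adj M v := ⟨hMv, key M.1 hM⟩
        have hNadj : (AG (∀ i, R i)).Adj v N := (AG (∀ i, R i)).adj_symm ⟨hNv, key N.1 hN⟩
        calc (AG (∀ i, R i)).dist M N
            ≤ (SimpleGraph.Walk.cons hMadj (SimpleGraph.Walk.cons hNadj .nil)).length :=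
              SimpleGraph.dist_le _
          _ ≤ 2 := by simp
end

section
/- Let R = R₁ × R₂ where R₁ is a finite commutative local chain ring with Jacobson radical J₁ of nilpotency order n₁ ≥ 2 and R₂ is a finite field. Then the set X = {J₁^k × 0 : 0 ≤ k ≤ n₁-2} (where J₁^0 = R₁) is a resolving set for AG(R) of cardinality n₁ - 1. -/
set_option linter.unusedSectionVars false
set_option maxHeartbeats 1000000


open Ideal IsLocalRing

lemma AGadj_iff {R : Type*} [CommRing R] (x y : AGVertex R) :
    (AG R).Adj x y ↔ x ≠ y ∧ x.1 * y.1 = ⊥ := Iff.rfl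

lemma existsMid {V : Type*} {G : SimpleGraph V} {x y : V} (h : G.dist x y = 2) :
    ∃ z, G.Adj x z ∧ G.Adj z y := by
  obtain ⟨p, hp⟩ := SimpleGraph.exists_walk_of_dist_ne_zero (G := G) (u := x) (v := y)
    (by omega)
  rw [h] at hp
  cases p with
  | nil => simp at hp
  | cons hadj q =>
    cases q with
    | nil => simp at hp
    | cons hadj2 q2 =>
      have hq2 : q2.length = 0 := by
        simp only [SimpleGraph.Walk.length_cons] at hp
        omega
      have := SimpleGraph.Walk.eq_of_length_eq_zero hq2
      exact ⟨_, hadj, this ▸ hadj2⟩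

lemma idealTopNeBot {F : Type*} [Field F] : (⊤ : Ideal F) ≠ ⊥ := by
  intro h
  have h1 : (1 : F) ∈ (⊤ : Ideal F) := Submodule.mem_top
  rw [h, Ideal.mem_bot] at h1
  exact one_ne_zero h1

section ProdLemmas
variable {A B : Type*} [CommRing A] [CommRing B]

lemma prodBotBot : Ideal.prod (⊥ : Ideal A) (⊥ : Ideal B) = ⊥ := by
  ext ⟨a, b⟩
  simp [Ideal.mem_prod, Prod.ext_iff]

lemma prodEqBotIff {I : Ideal A} {J : Ideal B} :
    Ideal.prod I J = ⊥ ↔ I = ⊥ ∧ J = ⊥ := by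
  constructor
  · intro h
    rw [← prodBotBot] at h
    exact Ideal.prod_inj.mp h
  · rintro ⟨rfl, rfl⟩
    exact prodBotBot

lemma prodMulLe {I K : Ideal A} {J L : Ideal B} :
    Ideal.prod I J * Ideal.prod K L ≤ Ideal.prod (I * K) (J * L) := by
  rw [Ideal.mul_le]
  intro r hr s hs
  have hr' : r.1 ∈ I ∧ r.2 ∈ J := (Ideal.mem_prod _ _).mp (by simpa using hr)
  have hs' : s.1 ∈ K ∧ s.2 ∈ L := (Ideal.mem_prod _ _).mp (by simpa using hs)
  have : ((r * s).1, (r * s).2) ∈ Ideal.prod (I * K) (J * L) :=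
    (Ideal.mem_prod _ _).mpr ⟨Ideal.mul_mem_mul hr'.1 hs'.1, Ideal.mul_mem_mul hr'.2 hs'.2⟩
  simpa using this

lemma prodMulEqBotIff {I K : Ideal A} {J L : Ideal B} :
    Ideal.prod I J * Ideal.prod K L = ⊥ ↔ I * K = ⊥ ∧ J * L = ⊥ := by
  constructor
  · intro h
    constructor
    · rw [eq_bot_iff, Ideal.mul_le]
      intro a ha c hc
      have : ((a, 0) : A × B) * (c, 0) ∈ Ideal.prod I J * Ideal.prod K L :=
        Ideal.mul_mem_mul ((Ideal.mem_prod _ _).mpr ⟨ha, J.zero_mem⟩)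
          ((Ideal.mem_prod _ _).mpr ⟨hc, L.zero_mem⟩)
      rw [h, Ideal.mem_bot] at this
      have h2 : ((a * c, 0) : A × B) = 0 := by simpa using this
      rw [Ideal.mem_bot]
      exact (Prod.ext_iff.mp h2).1
    · rw [eq_bot_iff, Ideal.mul_le]
      intro b hb d hd
      have : ((0, b) : A × B) * (0, d) ∈ Ideal.prod I J * Ideal.prod K L :=
        Ideal.mul_mem_mul ((Ideal.mem_prod _ _).mpr ⟨I.zero_mem, hb⟩)
          ((Ideal.mem_prod _ _).mpr ⟨K.zero_mem, hd⟩)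
      rw [h, Ideal.mem_bot] at this
      have h2 : ((0, b * d) : A × B) = 0 := by simpa using this
      rw [Ideal.mem_bot]
      exact (Prod.ext_iff.mp h2).2
  · rintro ⟨hik, hjl⟩
    have := prodMulLe (I := I) (K := K) (J := J) (L := L)
    rw [hik, hjl, prodBotBot] at this
    exact le_bot_iff.mp this

end ProdLemmas

section ChainRing
variable {R₁ : Type*} [CommRing R₁] [Finite R₁] [IsLocalRing R₁] [IsPrincipalIdealRing R₁]
variable {n₁ : ℕ} (hn : 2 ≤ n₁)
variable (h1 : (maximalIdeal R₁) ^ n₁ = ⊥) (h2 : (maximalIdeal R₁) ^ (n₁ - 1) ≠ ⊥)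
include hn h1 h2

lemma powBotIff (m : ℕ) : (maximalIdeal R₁) ^ m = ⊥ ↔ n₁ ≤ m := by
  constructor
  · intro h
    by_contra hm
    exact h2 (le_bot_iff.mp (h ▸ Ideal.pow_le_pow_right (by omega)))
  · intro h
    exact le_bot_iff.mp (h1 ▸ Ideal.pow_le_pow_right h)

lemma powInj {i j : ℕ} (hi : i ≤ n₁) (hj : j ≤ n₁)
    (hij : (maximalIdeal R₁) ^ i = (maximalIdeal R₁) ^ j) : i = j := by
  have key : ∀ a b : ℕ, a < b → b ≤ n₁ →
      (maximalIdeal R₁) ^ a = (maximalIdeal R₁) ^ b → False := by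
    intro a b hab hb he
    have hstep : (maximalIdeal R₁) ^ (a+1) = (maximalIdeal R₁) ^ a := by
      refine le_antisymm (Ideal.pow_le_pow_right (by omega)) ?_
      calc (maximalIdeal R₁) ^ a = (maximalIdeal R₁) ^ b := he
        _ ≤ (maximalIdeal R₁) ^ (a+1) := Ideal.pow_le_pow_right (by omega)
    have hall : ∀ m, (maximalIdeal R₁) ^ (a + m) = (maximalIdeal R₁) ^ a := by
      intro m
      induction m with
      | zero => rfl
      | succ m ih =>
        rw [← Nat.add_assoc, pow_succ, ih, ← pow_succ, hstep]
    have hbot : (maximalIdeal R₁) ^ a = ⊥ := by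
      have := hall (n₁ - a)
      rw [(by omega : a + (n₁ - a) = n₁), h1] at this
      exact this.symm
    rw [powBotIff hn h1 h2] at hbot
    omega
  rcases lt_trichotomy i j with h | h | h
  · exact absurd (key i j h hj hij) not_false
  · exact h
  · exact absurd (key j i h hi hij.symm) not_false

lemma idealClassify (I : Ideal R₁) : ∃ i ≤ n₁, I = (maximalIdeal R₁) ^ i := by
  obtain ⟨x, hx'⟩ := (IsPrincipalIdealRing.principal I).principal
  have hx : I = Ideal.span {x} := hx'
  rcases eq_or_ne x 0 with rfl | hx0
  · exact ⟨n₁, le_rfl, by rw [hx, h1]; simp⟩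
  classical
  obtain ⟨π, hπ'⟩ := (IsPrincipalIdealRing.principal (maximalIdeal R₁)).principal
  have hπ : maximalIdeal R₁ = Ideal.span {π} := hπ'
  have hP : ∃ m, x ∉ (maximalIdeal R₁) ^ m := by
    refine ⟨n₁, ?_⟩
    rw [h1]
    simpa [Ideal.mem_bot] using hx0
  set N := Nat.find hP with hN
  have hNpos : N ≠ 0 := by
    intro h0
    have := Nat.find_spec hP
    rw [← hN, h0, pow_zero] at this
    exact this (by simp [Ideal.one_eq_top])
  have hNle : N ≤ n₁ := Nat.find_le (by rw [h1]; simpa [Ideal.mem_bot] using hx0)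
  set k := N - 1 with hk
  have hxk : x ∈ (maximalIdeal R₁) ^ k := by
    by_contra h
    have hle : N ≤ k := Nat.find_le h
    omega
  have hxk1 : x ∉ (maximalIdeal R₁) ^ (k + 1) := by
    have : k + 1 = N := by omega
    rw [this]
    exact Nat.find_spec hP
  have hpowk : (maximalIdeal R₁) ^ k = Ideal.span {π ^ k} := by
    rw [hπ, Ideal.span_singleton_pow]
  obtain ⟨c, hc⟩ := Ideal.mem_span_singleton'.mp (hpowk ▸ hxk)
  have hcu : IsUnit c := by
    by_contra hcu
    apply hxk1
    have hcM : c ∈ maximalIdeal R₁ := hcu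
    have : c * π ^ k ∈ (maximalIdeal R₁) * (maximalIdeal R₁) ^ k :=
      Ideal.mul_mem_mul hcM (hpowk ▸ Ideal.mem_span_singleton'.mpr ⟨1, one_mul _⟩)
    rw [hc] at this
    rwa [pow_succ, mul_comm]
  refine ⟨k, by omega, ?_⟩
  rw [hx, ← hc, Ideal.span_singleton_mul_left_unit hcu, ← hpowk]

end ChainRing

section Main
variable {R₁ : Type*} [CommRing R₁] [Finite R₁] [IsLocalRing R₁] [IsPrincipalIdealRing R₁]
variable {R₂ : Type*} [Field R₂] [Finite R₂]
variable {n₁ : ℕ} (hn : 2 ≤ n₁)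
variable (h1 : (maximalIdeal R₁) ^ n₁ = ⊥) (h2 : (maximalIdeal R₁) ^ (n₁ - 1) ≠ ⊥)
include hn h1 h2

lemma vertBot {i : ℕ} (hi : i ≤ n₁ - 1) :
    AGIsVertex (Ideal.prod ((maximalIdeal R₁) ^ i) (⊥ : Ideal R₂)) := by
  constructor
  · intro h
    have := (prodEqBotIff.mp h).1
    rw [powBotIff hn h1 h2] at this
    omega
  · refine ⟨Ideal.prod ⊥ ⊤, ?_, ?_⟩
    · intro h
      have := (prodEqBotIff.mp h).2
      exact idealTopNeBot this
    · rw [prodMulEqBotIff]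
      exact ⟨Ideal.mul_bot _, Ideal.bot_mul _⟩

lemma vertTop {i : ℕ} (hi1 : 1 ≤ i) (hi2 : i ≤ n₁) :
    AGIsVertex (Ideal.prod ((maximalIdeal R₁) ^ i) (⊤ : Ideal R₂)) := by
  constructor
  · intro h
    exact idealTopNeBot (prodEqBotIff.mp h).2
  · refine ⟨Ideal.prod ((maximalIdeal R₁) ^ (n₁ - 1)) ⊥, ?_, ?_⟩
    · intro h
      exact h2 (prodEqBotIff.mp h).1
    · rw [prodMulEqBotIff]
      refine ⟨?_, Ideal.mul_bot _⟩
      rw [← pow_add]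
      rw [powBotIff hn h1 h2]
      omega

/-- The landmark vertices. -/
noncomputable def Wv (k : ℕ) : AGVertex (R₁ × R₂) :=
  ⟨Ideal.prod ((maximalIdeal R₁) ^ (min k (n₁ - 2))) ⊥, vertBot hn h1 h2 (by omega)⟩

lemma Wv_fst {k : ℕ} (hk : k ≤ n₁ - 2) :
    (Wv (R₂ := R₂) hn h1 h2 k).1 = Ideal.prod ((maximalIdeal R₁) ^ k) ⊥ := by
  show Ideal.prod ((maximalIdeal R₁) ^ (min k (n₁ - 2))) ⊥ = Ideal.prod ((maximalIdeal R₁) ^ k) ⊥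
  rw [min_eq_left hk]

/-- The vertex 0 × R₂. -/
noncomputable def Zv : AGVertex (R₁ × R₂) :=
  ⟨Ideal.prod ((maximalIdeal R₁) ^ n₁) ⊤, vertTop hn h1 h2 (by omega) le_rfl⟩

lemma Zv_fst : (Zv (R₂ := R₂) hn h1 h2).1 = Ideal.prod ⊥ ⊤ := by
  show Ideal.prod ((maximalIdeal R₁) ^ n₁) ⊤ = Ideal.prod ⊥ ⊤
  rw [h1]

/-- Any vertex whose ideal has zero second component is adjacent to `Zv`. -/
lemma adj_Zv (x : AGVertex (R₁ × R₂)) (I : Ideal R₁) (hx : x.1 = Ideal.prod I ⊥) :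
    (AG (R₁ × R₂)).Adj x (Zv (R₂ := R₂) hn h1 h2) := by
  rw [AGadj_iff]
  constructor
  · intro h
    rw [h, Zv_fst] at hx
    exact idealTopNeBot (Ideal.prod_inj.mp hx.symm).2.symm
  · rw [hx, Zv_fst, prodMulEqBotIff]
    exact ⟨Ideal.mul_bot _, Ideal.bot_mul _⟩

/-- Adjacency to a landmark vertex, characterized numerically. -/
lemma adj_Wv_iff (x : AGVertex (R₁ × R₂)) (i k : ℕ) (J : Ideal R₂) (hk : k ≤ n₁ - 2)
    (hx : x.1 = Ideal.prod ((maximalIdeal R₁) ^ i) J) :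
    (AG (R₁ × R₂)).Adj x (Wv (R₂ := R₂) hn h1 h2 k) ↔ x ≠ Wv (R₂ := R₂) hn h1 h2 k ∧ n₁ ≤ i + k := by
  rw [AGadj_iff]
  refine and_congr_right fun _ => ?_
  rw [hx, Wv_fst hn h1 h2 hk, prodMulEqBotIff]
  constructor
  · intro h
    have := h.1
    rw [← pow_add, powBotIff hn h1 h2] at this
    exact this
  · intro h
    refine ⟨?_, Ideal.mul_bot _⟩
    rw [← pow_add, powBotIff hn h1 h2]
    exact h

/-- Vertices of the second kind are never landmark vertices. -/
lemma ne_Wv_of_top (x : AGVertex (R₁ × R₂)) (I : Ideal R₁)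
    (hx : x.1 = Ideal.prod I ⊤) (k : ℕ) : x ≠ Wv (R₂ := R₂) hn h1 h2 k := by
  intro h
  rw [h] at hx
  have hW : (Wv (R₂ := R₂) hn h1 h2 k).1
      = Ideal.prod ((maximalIdeal R₁) ^ (min k (n₁ - 2))) ⊥ := rfl
  rw [hW] at hx
  exact idealTopNeBot (Ideal.prod_inj.mp hx).2.symm

/-- The vertex M^(n₁-1) × 0. -/
noncomputable def Yv : AGVertex (R₁ × R₂) :=
  ⟨Ideal.prod ((maximalIdeal R₁) ^ (n₁ - 1)) ⊥, vertBot hn h1 h2 le_rfl⟩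

lemma Yv_fst : (Yv (R₂ := R₂) hn h1 h2).1 = Ideal.prod ((maximalIdeal R₁) ^ (n₁ - 1)) ⊥ := rfl

lemma adj_Yv (x : AGVertex (R₁ × R₂)) (i : ℕ) (hi1 : 1 ≤ i) (hi2 : i ≤ n₁)
    (hx : x.1 = Ideal.prod ((maximalIdeal R₁) ^ i) ⊤) :
    (AG (R₁ × R₂)).Adj x (Yv (R₂ := R₂) hn h1 h2) := by
  rw [AGadj_iff]
  constructor
  · intro h
    rw [h, Yv_fst] at hx
    exact idealTopNeBot (Ideal.prod_inj.mp hx).2.symm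
  · rw [hx, Yv_fst, prodMulEqBotIff]
    refine ⟨?_, Ideal.mul_bot _⟩
    rw [← pow_add, powBotIff hn h1 h2]
    omega

lemma reach_bot (x : AGVertex (R₁ × R₂)) (I : Ideal R₁) (hx : x.1 = Ideal.prod I ⊥) (k : ℕ) :
    (AG (R₁ × R₂)).Reachable x (Wv (R₂ := R₂) hn h1 h2 k) :=
  (adj_Zv hn h1 h2 x I hx).reachable.trans
    (adj_Zv hn h1 h2 (Wv (R₂ := R₂) hn h1 h2 k)
      ((maximalIdeal R₁) ^ (min k (n₁ - 2))) rfl).reachable.symm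

lemma reach_top (x : AGVertex (R₁ × R₂)) (i : ℕ) (hi1 : 1 ≤ i) (hi2 : i ≤ n₁)
    (hx : x.1 = Ideal.prod ((maximalIdeal R₁) ^ i) ⊤) (k : ℕ) :
    (AG (R₁ × R₂)).Reachable x (Wv (R₂ := R₂) hn h1 h2 k) :=
  (adj_Yv hn h1 h2 x i hi1 hi2 hx).reachable.trans
    (reach_bot hn h1 h2 (Yv (R₂ := R₂) hn h1 h2) ((maximalIdeal R₁) ^ (n₁ - 1)) rfl k)

lemma dist_le_two_bot (x : AGVertex (R₁ × R₂)) (I : Ideal R₁)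
    (hx : x.1 = Ideal.prod I ⊥) (k : ℕ) :
    (AG (R₁ × R₂)).dist x (Wv (R₂ := R₂) hn h1 h2 k) ≤ 2 := by
  have hadj1 := adj_Zv hn h1 h2 x I hx
  have hadj2 := adj_Zv hn h1 h2 (Wv (R₂ := R₂) hn h1 h2 k)
    ((maximalIdeal R₁) ^ (min k (n₁ - 2))) rfl
  have := SimpleGraph.dist_le
    (SimpleGraph.Walk.cons hadj1 (SimpleGraph.Walk.cons hadj2.symm SimpleGraph.Walk.nil))
  simpa using this

lemma distA (x : AGVertex (R₁ × R₂)) (i : ℕ) (hi : i ≤ n₁ - 1)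
    (hx : x.1 = Ideal.prod ((maximalIdeal R₁) ^ i) ⊥) (k : ℕ) (hk : k ≤ n₁ - 2) :
    (AG (R₁ × R₂)).dist x (Wv (R₂ := R₂) hn h1 h2 k) =
      if i = k then 0 else if n₁ ≤ i + k then 1 else 2 := by
  have hWk : (Wv (R₂ := R₂) hn h1 h2 k).1 = Ideal.prod ((maximalIdeal R₁) ^ k) ⊥ :=
    Wv_fst hn h1 h2 hk
  have hnexy : i ≠ k → x ≠ Wv (R₂ := R₂) hn h1 h2 k := by
    intro hik h
    rw [h, hWk] at hx
    exact hik (powInj hn h1 h2 (by omega) (by omega)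
      (Ideal.prod_inj.mp hx).1.symm)
  split_ifs with hik hadd
  · have : x = Wv (R₂ := R₂) hn h1 h2 k := Subtype.ext (by rw [hx, hWk, hik])
    rw [this, SimpleGraph.dist_self]
  · rw [SimpleGraph.dist_eq_one_iff_adj, adj_Wv_iff hn h1 h2 x i k ⊥ hk hx]
    exact ⟨hnexy hik, hadd⟩
  · have hub := dist_le_two_bot hn h1 h2 x ((maximalIdeal R₁) ^ i) hx k
    have h0 : (AG (R₁ × R₂)).dist x (Wv (R₂ := R₂) hn h1 h2 k) ≠ 0 :=
      SimpleGraph.dist_ne_zero_iff_ne_and_reachable.mpr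
        ⟨hnexy hik, reach_bot hn h1 h2 x ((maximalIdeal R₁) ^ i) hx k⟩
    have h1' : (AG (R₁ × R₂)).dist x (Wv (R₂ := R₂) hn h1 h2 k) ≠ 1 := by
      intro hd
      have := (adj_Wv_iff hn h1 h2 x i k ⊥ hk hx).mp
        (SimpleGraph.dist_eq_one_iff_adj.mp hd)
      omega
    omega

lemma distB_one_iff (x : AGVertex (R₁ × R₂)) (i : ℕ) (hi1 : 1 ≤ i) (hi2 : i ≤ n₁)
    (hx : x.1 = Ideal.prod ((maximalIdeal R₁) ^ i) ⊤) (k : ℕ) (hk : k ≤ n₁ - 2) :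
    (AG (R₁ × R₂)).dist x (Wv (R₂ := R₂) hn h1 h2 k) = 1 ↔ n₁ ≤ i + k := by
  rw [SimpleGraph.dist_eq_one_iff_adj, adj_Wv_iff hn h1 h2 x i k ⊤ hk hx]
  exact ⟨fun h => h.2, fun h => ⟨ne_Wv_of_top hn h1 h2 x _ hx k, h⟩⟩

lemma distB_ne_zero (x : AGVertex (R₁ × R₂)) (i : ℕ) (hi1 : 1 ≤ i) (hi2 : i ≤ n₁)
    (hx : x.1 = Ideal.prod ((maximalIdeal R₁) ^ i) ⊤) (k : ℕ) :
    (AG (R₁ × R₂)).dist x (Wv (R₂ := R₂) hn h1 h2 k) ≠ 0 :=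
  SimpleGraph.dist_ne_zero_iff_ne_and_reachable.mpr
    ⟨ne_Wv_of_top hn h1 h2 x _ hx k, reach_top hn h1 h2 x i hi1 hi2 hx k⟩

lemma distB_ne_two_zero (x : AGVertex (R₁ × R₂)) (i : ℕ) (hi1 : 1 ≤ i) (hi : i ≤ n₁ - 1)
    (hx : x.1 = Ideal.prod ((maximalIdeal R₁) ^ i) ⊤) :
    (AG (R₁ × R₂)).dist x (Wv (R₂ := R₂) hn h1 h2 0) ≠ 2 := by
  intro hdist
  obtain ⟨z, hxz, hzW⟩ := existsMid hdist
  have hzmul := hzW.2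
  have hW0 : (Wv (R₂ := R₂) hn h1 h2 0).1 = Ideal.prod ((maximalIdeal R₁) ^ 0) ⊥ :=
    Wv_fst hn h1 h2 (by omega)
  have hzdec := Ideal.ideal_prod_eq z.1
  rw [hzdec, hW0, prodMulEqBotIff] at hzmul
  have hfst : Ideal.map (RingHom.fst R₁ R₂) z.1 = ⊥ := by
    have := hzmul.1
    rwa [pow_zero, Ideal.one_eq_top, Ideal.mul_top] at this
  have hsnd : Ideal.map (RingHom.snd R₁ R₂) z.1 = ⊤ := by
    rcases Ideal.eq_bot_or_top (Ideal.map (RingHom.snd R₁ R₂) z.1) with h | h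
    · exact absurd (by rw [hzdec, hfst, h, prodBotBot]) z.2.1
    · exact h
  have hmul := hxz.2
  rw [hx, hzdec, hfst, hsnd, prodMulEqBotIff] at hmul
  have := hmul.2
  rw [Ideal.mul_top] at this
  exact idealTopNeBot this

lemma classify (x : AGVertex (R₁ × R₂)) :
    (∃ i ≤ n₁ - 1, x.1 = Ideal.prod ((maximalIdeal R₁) ^ i) ⊥) ∨
    (∃ i, 1 ≤ i ∧ i ≤ n₁ ∧ x.1 = Ideal.prod ((maximalIdeal R₁) ^ i) ⊤) := by
  have hx := Ideal.ideal_prod_eq x.1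
  obtain ⟨i, hi, hIi⟩ := idealClassify hn h1 h2 (Ideal.map (RingHom.fst R₁ R₂) x.1)
  rcases Ideal.eq_bot_or_top (Ideal.map (RingHom.snd R₁ R₂) x.1) with hJ | hJ
  · left
    refine ⟨i, ?_, by rw [hx, hIi, hJ]⟩
    by_contra hgt
    have hbot : (maximalIdeal R₁) ^ i = ⊥ := (powBotIff hn h1 h2 i).mpr (by omega)
    exact x.2.1 (by rw [hx, hIi, hJ, hbot, prodBotBot])
  · right
    have hx1 : x.1 = Ideal.prod ((maximalIdeal R₁) ^ i) ⊤ := by rw [hx, hIi, hJ]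
    obtain ⟨hne, K, hK, hprod⟩ := x.2
    have hKeq := Ideal.ideal_prod_eq K
    obtain ⟨m, hm, hKm⟩ := idealClassify hn h1 h2 (Ideal.map (RingHom.fst R₁ R₂) K)
    rcases Ideal.eq_bot_or_top (Ideal.map (RingHom.snd R₁ R₂) K) with hK2 | hK2
    · rw [hx1, hKeq, hKm, hK2, prodMulEqBotIff] at hprod
      have hfst := hprod.1
      have hmne : (maximalIdeal R₁) ^ m ≠ ⊥ := by
        intro hb
        exact hK (by rw [hKeq, hKm, hK2, hb, prodBotBot])
      have hmlt : ¬ n₁ ≤ m := fun h => hmne ((powBotIff hn h1 h2 m).mpr h)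
      rw [← pow_add, powBotIff hn h1 h2] at hfst
      exact ⟨i, by omega, hi, hx1⟩
    · exfalso
      rw [hx1, hKeq, hKm, hK2, prodMulEqBotIff] at hprod
      have := hprod.2
      rw [Ideal.mul_top] at this
      exact idealTopNeBot this

end Main

theorem stmt10 (R₁ : Type*) [CommRing R₁] [Finite R₁] [IsLocalRing R₁]
    [IsPrincipalIdealRing R₁] (R₂ : Type*) [Field R₂] [Finite R₂]
    (n₁ : ℕ) (hn : 2 ≤ n₁)
    (h1 : (maximalIdeal R₁) ^ n₁ = ⊥) (h2 : (maximalIdeal R₁) ^ (n₁ - 1) ≠ ⊥) :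
    IsResolving (AG (R₁ × R₂))
      {v : AGVertex (R₁ × R₂) | ∃ k ≤ n₁ - 2, v.1 = Ideal.prod ((maximalIdeal R₁) ^ k) ⊥} ∧
    Set.ncard
      {v : AGVertex (R₁ × R₂) | ∃ k ≤ n₁ - 2, v.1 = Ideal.prod ((maximalIdeal R₁) ^ k) ⊥}
      = n₁ - 1 := by
  constructor
  · intro u v huv
    have hd : ∀ k, k ≤ n₁ - 2 →
        (AG (R₁ × R₂)).dist u (Wv (R₂ := R₂) hn h1 h2 k)
          = (AG (R₁ × R₂)).dist v (Wv (R₂ := R₂) hn h1 h2 k) :=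
      fun k hk => huv _ ⟨k, hk, Wv_fst hn h1 h2 hk⟩
    rcases classify hn h1 h2 u with ⟨i, hi, hu⟩ | ⟨i, hi1, hi2, hu⟩ <;>
      rcases classify hn h1 h2 v with ⟨j, hj, hv⟩ | ⟨j, hj1, hj2, hv⟩
    · -- both of the form M^i × 0
      have hij : i = j := by
        by_contra hij
        have hk : min i j ≤ n₁ - 2 := by omega
        have hthis := hd (min i j) hk
        rw [distA hn h1 h2 u i hi hu _ hk, distA hn h1 h2 v j hj hv _ hk] at hthis
        split_ifs at hthis <;> omega
      exact Subtype.ext (by rw [hu, hv, hij])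
    · -- u = M^i × 0, v = M^j × R₂
      exfalso
      rcases Nat.lt_or_ge i (n₁ - 1) with hlt | hge
      · have hk : i ≤ n₁ - 2 := by omega
        have hthis := hd i hk
        rw [distA hn h1 h2 u i hi hu i hk, if_pos rfl] at hthis
        exact distB_ne_zero hn h1 h2 v j hj1 hj2 hv i hthis.symm
      · have hk0 : (0:ℕ) ≤ n₁ - 2 := by omega
        have hdu := distA hn h1 h2 u i hi hu 0 hk0
        rw [if_neg (by omega), if_neg (by omega)] at hdu
        have hthis := hd 0 hk0
        rw [hdu] at hthis
        rcases Nat.lt_or_ge j n₁ with hjlt | hjge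
        · exact distB_ne_two_zero hn h1 h2 v j hj1 (by omega) hv hthis.symm
        · have hone := (distB_one_iff hn h1 h2 v j hj1 hj2 hv 0 hk0).mpr (by omega)
          rw [hone] at hthis
          omega
    · -- u = M^i × R₂, v = M^j × 0
      exfalso
      rcases Nat.lt_or_ge j (n₁ - 1) with hlt | hge
      · have hk : j ≤ n₁ - 2 := by omega
        have hthis := (hd j hk).symm
        rw [distA hn h1 h2 v j hj hv j hk, if_pos rfl] at hthis
        exact distB_ne_zero hn h1 h2 u i hi1 hi2 hu j hthis.symm
      · have hk0 : (0:ℕ) ≤ n₁ - 2 := by omega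
        have hdv := distA hn h1 h2 v j hj hv 0 hk0
        rw [if_neg (by omega), if_neg (by omega)] at hdv
        have hthis := (hd 0 hk0).symm
        rw [hdv] at hthis
        rcases Nat.lt_or_ge i n₁ with hilt | hige
        · exact distB_ne_two_zero hn h1 h2 u i hi1 (by omega) hu hthis.symm
        · have hone := (distB_one_iff hn h1 h2 u i hi1 hi2 hu 0 hk0).mpr (by omega)
          rw [hone] at hthis
          omega
    · -- both of the form M^i × R₂
      rcases eq_or_ne i j with rfl | hij
      · exact Subtype.ext (by rw [hu, hv])
      · exfalso
        have hk : n₁ - max i j ≤ n₁ - 2 := by omega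
        have hiff1 := distB_one_iff hn h1 h2 u i hi1 hi2 hu (n₁ - max i j) hk
        have hiff2 := distB_one_iff hn h1 h2 v j hj1 hj2 hv (n₁ - max i j) hk
        have hdk := hd (n₁ - max i j) hk
        have hcase : n₁ ≤ i + (n₁ - max i j) ∨ n₁ ≤ j + (n₁ - max i j) := by omega
        rcases hcase with hc | hc
        · have hb1 := hiff1.mpr hc
          rw [hb1] at hdk
          have := hiff2.mp hdk.symm
          omega
        · have hb2 := hiff2.mpr hc
          rw [hb2] at hdk
          have := hiff1.mp hdk
          omega
  · have hset : {v : AGVertex (R₁ × R₂) |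
        ∃ k ≤ n₁ - 2, v.1 = Ideal.prod ((maximalIdeal R₁) ^ k) ⊥}
        = (fun k => Wv (R₂ := R₂) hn h1 h2 k) '' (Set.Iic (n₁ - 2)) := by
      ext x
      constructor
      · rintro ⟨k, hk, hx⟩
        exact ⟨k, hk, Subtype.ext ((Wv_fst hn h1 h2 hk).trans hx.symm)⟩
      · rintro ⟨k, hk, rfl⟩
        exact ⟨k, Set.mem_Iic.mp hk, Wv_fst hn h1 h2 (Set.mem_Iic.mp hk)⟩
    rw [hset, Set.ncard_image_of_injOn, ← Finset.coe_Iic, Set.ncard_coe_finset,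
      Nat.card_Iic]
    · omega
    · intro a ha b hb hab
      have ha' : a ≤ n₁ - 2 := Set.mem_Iic.mp ha
      have hb' : b ≤ n₁ - 2 := Set.mem_Iic.mp hb
      have hval := congrArg Subtype.val hab
      rw [Wv_fst hn h1 h2 ha', Wv_fst hn h1 h2 hb'] at hval
      exact powInj hn h1 h2 (by omega) (by omega) (Ideal.prod_inj.mp hval).1
end
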